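/- For any commutative ring Λ there exists a commutative ring Λ' together with a faithfully flat ring homomorphism Λ → Λ' such that the group of units of Λ' is a divisible abelian group. -/

import Mathlib

/-!
Adjoining `m`-th roots of all elements of a ring `A`, i.e. passing to
`A[X_a : a ∈ A] / (X_a ^ m - a)`, gives a free `A`-module: the monomials with all exponents `< m`
form a basis, as the normal form `X ^ e ↦ (∏ a ^ (e_a / m)) X ^ (e % m)` shows. So the extension
is faithfully flat. Iterating, with `(k + 1)!`-th roots at stage `k`, gives a tower of faithfully
flat extensions of `Λ` in which every element of a stage has an `n`-th root at a later stage.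
Faithful flatness passes to the union of the tower: a linear relation, or an expression of `1` as
an element of `I • Λ'`, involves only finitely many elements and therefore lives in one stage.
-/

open MvPolynomial

namespace Finsupp

variable {σ : Type*}

noncomputable def divNat (e : σ →₀ ℕ) (m : ℕ) : σ →₀ ℕ :=
  e.mapRange (· / m) (Nat.zero_div m)

noncomputable def modNat (e : σ →₀ ℕ) (m : ℕ) : σ →₀ ℕ :=
  e.mapRange (· % m) (Nat.zero_mod m)

@[simp]
theorem divNat_apply (e : σ →₀ ℕ) (m : ℕ) (i : σ) : e.divNat m i = e i / m := rfl

@[simp]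
theorem modNat_apply (e : σ →₀ ℕ) (m : ℕ) (i : σ) : e.modNat m i = e i % m := rfl

theorem smul_divNat_add_modNat (e : σ →₀ ℕ) (m : ℕ) :
    m • e.divNat m + e.modNat m = e := by
  ext; simp [Nat.div_add_mod]

theorem divNat_add_single {m : ℕ} (hm : 0 < m) (e : σ →₀ ℕ) (i : σ) :
    (e + single i m).divNat m = e.divNat m + single i 1 := by
  classical
  ext j; by_cases h : i = j <;> simp [h, Nat.add_div_right _ hm]

theorem modNat_add_single (e : σ →₀ ℕ) (m : ℕ) (i : σ) :
    (e + single i m).modNat m = e.modNat m := by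
  classical
  ext j; by_cases h : i = j <;> simp [h]

end Finsupp

theorem Module.Flat.of_directed_iSup_eq_top {R M ι : Type*} [CommRing R] [AddCommGroup M]
    [Module R M] [Nonempty ι] {N : ι → Submodule R M} (hdir : Directed (· ≤ ·) N)
    (htop : ⨆ i, N i = ⊤) [∀ i, Module.Flat R (N i)] : Module.Flat R M := by
  refine .of_forall_isTrivialRelation fun {l f x} hfx => ?_
  choose i hi using fun k =>
    (Submodule.mem_iSup_of_directed N hdir).mp (htop ▸ Submodule.mem_top (x := x k))
  obtain ⟨j, hj⟩ := hdir.finite_le i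
  let x' : Fin l → N j := fun k => ⟨x k, hj k (hi k)⟩
  obtain ⟨n, c, y, hxy, hfc⟩ := isTrivialRelation_of_sum_smul_eq_zero (f := f) (x := x')
    (Subtype.ext (by simpa [x'] using hfx))
  exact ⟨n, c, fun k => y k, fun k => by simpa using congrArg Subtype.val (hxy k), hfc⟩

theorem Ideal.smul_top_eq_top_of_one_mem {R B : Type*} [CommRing R] [CommRing B]
    [Algebra R B] {I : Ideal R} (h : (1 : B) ∈ I • (⊤ : Submodule R B)) :
    I • (⊤ : Submodule R B) = ⊤ := by
  rw [Ideal.smul_top_eq_map] at h ⊢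
  rw [(Ideal.eq_top_iff_one _).mpr h, Submodule.restrictScalars_top]

theorem Module.FaithfullyFlat.of_directed_iSup_eq_top {R B ι : Type*} [CommRing R] [CommRing B]
    [Algebra R B] [Nonempty ι] {S : ι → Subalgebra R B} (hdir : Directed (· ≤ ·) S)
    (htop : ⨆ i, S i = ⊤) [∀ i, Module.FaithfullyFlat R (S i)] :
    Module.FaithfullyFlat R B := by
  have hdir' : Directed (· ≤ ·) fun i => Subalgebra.toSubmodule (S i) :=
    hdir.mono_comp _ fun _ _ h => h
  have htop' : ⨆ i, Subalgebra.toSubmodule (S i) = ⊤ := by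
    refine eq_top_iff.mpr fun x _ => ?_
    have hx : x ∈ ((⨆ i, S i : Subalgebra R B) : Set B) := htop ▸ Algebra.mem_top
    rw [Subalgebra.coe_iSup_of_directed hdir, Set.mem_iUnion] at hx
    obtain ⟨i, hi⟩ := hx
    exact Submodule.mem_iSup_of_mem i hi
  have : ∀ i, Module.Flat R (Subalgebra.toSubmodule (S i)) := fun i =>
    inferInstanceAs (Module.Flat R (S i))
  have := Module.Flat.of_directed_iSup_eq_top hdir' htop'
  refine (iff_flat_and_ideal_smul_eq_top R B).mpr ⟨inferInstance, fun I hI => ?_⟩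
  have hone : (1 : B) ∈ ⨆ i, I • Subalgebra.toSubmodule (S i) := by
    rw [← Submodule.smul_iSup, htop', hI]; exact Submodule.mem_top
  obtain ⟨i, hi⟩ := (Submodule.mem_iSup_of_directed _
    (hdir'.mono_comp _ fun _ _ h => smul_mono_right I h)).mp hone
  have hone_i : (1 : S i) ∈ I • (⊤ : Submodule R (S i)) :=
    (Submodule.mem_smul_top_iff I (Subalgebra.toSubmodule (S i)) ⟨1, (S i).one_mem⟩).mpr hi
  exact ((iff_flat_and_ideal_smul_eq_top R (S i)).mp inferInstance).2 I
    (Ideal.smul_top_eq_top_of_one_mem hone_i)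

noncomputable section

variable {A σ : Type*} [CommRing A]

def rootsIdeal (a : σ → A) (m : ℕ) : Ideal (MvPolynomial σ A) :=
  Ideal.span (Set.range fun i => X i ^ m - C (a i))

abbrev AdjoinRoots (a : σ → A) (m : ℕ) : Type _ :=
  MvPolynomial σ A ⧸ rootsIdeal a m

abbrev ReducedExponent (σ : Type*) (m : ℕ) : Type _ := {e : σ →₀ ℕ // ∀ i, e i < m}

namespace ReducedExponent

variable {m : ℕ}

def reduce (hm : 0 < m) (e : σ →₀ ℕ) : ReducedExponent σ m :=
  ⟨e.modNat m, fun _ => Nat.mod_lt _ hm⟩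

theorem reduce_val (hm : 0 < m) (e : ReducedExponent σ m) : reduce hm e.1 = e :=
  Subtype.ext (Finsupp.ext fun i => Nat.mod_eq_of_lt (e.2 i))

theorem reduce_add_single (hm : 0 < m) (e : σ →₀ ℕ) (i : σ) :
    reduce hm (e + Finsupp.single i m) = reduce hm e :=
  Subtype.ext (Finsupp.modNat_add_single e m i)

theorem divNat_val (e : ReducedExponent σ m) : e.1.divNat m = 0 :=
  Finsupp.ext fun i => Nat.div_eq_of_lt (e.2 i)

end ReducedExponent

namespace AdjoinRoots

variable (a : σ → A) {m : ℕ}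

def root (i : σ) : AdjoinRoots a m := Ideal.Quotient.mk _ (X i)

theorem root_pow (i : σ) : root a i ^ m = algebraMap A (AdjoinRoots a m) (a i) := by
  rw [root, ← map_pow, IsScalarTower.algebraMap_apply A (MvPolynomial σ A), algebraMap_eq,
    Ideal.Quotient.algebraMap_eq, Ideal.Quotient.eq]
  exact Ideal.subset_span ⟨i, rfl⟩

theorem mk_expand (p : MvPolynomial σ A) :
    Ideal.Quotient.mk (rootsIdeal a m) (expand m p) = algebraMap A _ (aeval a p) := by
  have : (Ideal.Quotient.mkₐ A (rootsIdeal a m)).comp (expand m)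
      = (Algebra.ofId A (AdjoinRoots a m)).comp (aeval a) := by
    ext i
    simpa [expand_X, root] using root_pow a i
  exact DFunLike.congr_fun this p

theorem mk_monomial (e : σ →₀ ℕ) (r : A) :
    Ideal.Quotient.mk (rootsIdeal a m) (monomial e r) =
      (r * (e.divNat m).prod fun i k => a i ^ k) •
        Ideal.Quotient.mk (rootsIdeal a m) (monomial (e.modNat m) 1) := by
  have : monomial e r = monomial (e.modNat m) 1 * expand m (monomial (e.divNat m) r) := by
    rw [expand_monomial, monomial_mul, one_mul, add_comm, e.smul_divNat_add_modNat]
  rw [this, map_mul, mk_expand, aeval_monomial, Algebra.algebraMap_self, RingHom.id_apply,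
    mul_comm]
  exact (Algebra.smul_def _ _).symm

def normalForm (hm : 0 < m) : MvPolynomial σ A →ₗ[A] ReducedExponent σ m →₀ A :=
  (basisMonomials σ A).constr A fun e =>
    Finsupp.single (.reduce hm e) ((e.divNat m).prod fun i k => a i ^ k)

theorem normalForm_monomial (hm : 0 < m) (e : σ →₀ ℕ) (r : A) :
    normalForm a hm (monomial e r) =
      Finsupp.single (.reduce hm e) (r * (e.divNat m).prod fun i k => a i ^ k) := by
  have : monomial e r = r • basisMonomials σ A e := by simp [smul_monomial]
  rw [this, map_smul, normalForm, Module.Basis.constr_basis, Finsupp.smul_single, smul_eq_mul]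

theorem normalForm_mul_relation (hm : 0 < m) (p : MvPolynomial σ A) (i : σ) :
    normalForm a hm (p * (X i ^ m - C (a i))) = 0 := by
  induction p using MvPolynomial.induction_on' with
  | monomial e r =>
    rw [mul_sub, X_pow_eq_monomial, monomial_mul, C_apply, monomial_mul, mul_one, add_zero,
      map_sub, normalForm_monomial, normalForm_monomial, ReducedExponent.reduce_add_single,
      Finsupp.divNat_add_single hm, Finsupp.prod_add_index' (fun _ => pow_zero _)
        (fun _ _ _ => pow_add _ _ _), ← Finsupp.single_sub, Finsupp.single_eq_zero,
      Finsupp.prod_single_index (h := fun j k => a j ^ k) (pow_zero (a i)), pow_one]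
    ring
  | add p q hp hq => rw [add_mul, map_add, hp, hq, add_zero]

theorem normalForm_eq_zero_of_mem (hm : 0 < m) {p : MvPolynomial σ A}
    (hp : p ∈ rootsIdeal a m) : normalForm a hm p = 0 := by
  obtain ⟨c, rfl⟩ := Finsupp.mem_span_range_iff_exists_finsupp.mp hp
  simp [Finsupp.sum, map_sum, normalForm_mul_relation]

theorem normalForm_comp_linearCombination (hm : 0 < m) :
    normalForm a hm ∘ₗ
        Finsupp.linearCombination A (fun e : ReducedExponent σ m => monomial e.1 1) =
      LinearMap.id :=
  Finsupp.lhom_ext fun e r => by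
    simp [smul_monomial, normalForm_monomial, ReducedExponent.reduce_val,
      ReducedExponent.divNat_val]

theorem linearIndependent_mk_monomial (hm : 0 < m) :
    LinearIndependent A fun e : ReducedExponent σ m =>
      Ideal.Quotient.mk (rootsIdeal a m) (monomial e.1 (1 : A)) := by
  rw [linearIndependent_iff]
  intro l hl
  have hmem : Finsupp.linearCombination A (fun e : ReducedExponent σ m => monomial e.1 (1 : A)) l
      ∈ rootsIdeal a m := by
    rw [← Ideal.Quotient.eq_zero_iff_mem, ← Ideal.Quotient.mkₐ_eq_mk A,
      ← AlgHom.toLinearMap_apply, Finsupp.apply_linearCombination]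
    exact hl
  have := normalForm_eq_zero_of_mem a hm hmem
  rwa [← LinearMap.comp_apply, normalForm_comp_linearCombination, LinearMap.id_apply] at this

theorem span_mk_monomial (hm : 0 < m) :
    ⊤ ≤ Submodule.span A (Set.range fun e : ReducedExponent σ m =>
      Ideal.Quotient.mk (rootsIdeal a m) (monomial e.1 (1 : A))) := by
  rintro x -
  obtain ⟨p, rfl⟩ := Ideal.Quotient.mk_surjective x
  induction p using MvPolynomial.induction_on' with
  | monomial e r =>
    rw [mk_monomial]
    exact Submodule.smul_mem _ _ (Submodule.subset_span ⟨.reduce hm e, rfl⟩)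
  | add p q hp hq => rw [map_add]; exact Submodule.add_mem _ hp hq

def basis (hm : 0 < m) : Module.Basis (ReducedExponent σ m) A (AdjoinRoots a m) :=
  .mk (linearIndependent_mk_monomial a hm) (span_mk_monomial a hm)

theorem faithfullyFlat (hm : 0 < m) : Module.FaithfullyFlat A (AdjoinRoots a m) :=
  haveI : Nonempty (ReducedExponent σ m) := ⟨⟨0, fun _ => hm⟩⟩
  .of_linearEquiv _ _ (basis a hm).repr

end AdjoinRoots

end

noncomputable section

variable {G : ℕ → Type*} [∀ k, CommRing (G k)] (φ : ∀ k, G k →+* G (k + 1))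

def seqHom {i j : ℕ} (h : i ≤ j) : G i →+* G j :=
  Nat.leRecOn h (fun {k} g => (φ k).comp g) (RingHom.id _)

theorem seqHom_self (i : ℕ) : seqHom φ (le_refl i) = RingHom.id (G i) :=
  Nat.leRecOn_self _

theorem seqHom_succ {i j : ℕ} (h : i ≤ j) :
    seqHom φ (h.trans j.le_succ) = (φ j).comp (seqHom φ h) :=
  Nat.leRecOn_succ h _

theorem seqHom_le_succ (k : ℕ) : seqHom φ k.le_succ = φ k := by
  rw [seqHom_succ φ le_rfl, seqHom_self, RingHom.comp_id]

theorem seqHom_seqHom {i j k : ℕ} (hij : i ≤ j) (hjk : j ≤ k) (x : G i) :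
    seqHom φ hjk (seqHom φ hij x) = seqHom φ (hij.trans hjk) x := by
  induction k, hjk using Nat.le_induction with
  | base => rw [seqHom_self]; rfl
  | succ k hjk ih =>
    rw [seqHom_succ φ hjk, seqHom_succ φ (hij.trans hjk), RingHom.comp_apply, ih]; rfl

instance : DirectedSystem G fun _ _ h => seqHom φ h where
  map_self i x := by rw [seqHom_self]; rfl
  map_map _ _ _ hij hjk x := seqHom_seqHom φ hij hjk x

abbrev SeqLimit : Type _ := Ring.DirectLimit G fun _ _ h => seqHom φ h

variable {φ}

theorem seqHom_faithfullyFlat (hφ : ∀ k, (φ k).FaithfullyFlat) {i j : ℕ} (h : i ≤ j) :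
    (seqHom φ h).FaithfullyFlat := by
  induction j, h using Nat.le_induction with
  | base => rw [seqHom_self]; exact .of_bijective Function.bijective_id
  | succ j h ih =>
    rw [seqHom_succ φ h]; exact RingHom.FaithfullyFlat.stableUnderComposition _ _ ih (hφ j)

theorem SeqLimit.of_injective (hφ : ∀ k, (φ k).FaithfullyFlat) (k : ℕ) :
    Function.Injective (Ring.DirectLimit.of G (fun _ _ h => seqHom φ h) k) :=
  Ring.DirectLimit.of_injective _ (fun _ _ h => (seqHom_faithfullyFlat hφ h).injective) k

theorem SeqLimit.of_zero_faithfullyFlat (hφ : ∀ k, (φ k).FaithfullyFlat) :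
    (Ring.DirectLimit.of G (fun _ _ h => seqHom φ h) 0).FaithfullyFlat := by
  set g := Ring.DirectLimit.of G (fun _ _ h => seqHom φ h)
  let _ : Algebra (G 0) (SeqLimit φ) := (g 0).toAlgebra
  let S : ℕ → Subalgebra (G 0) (SeqLimit φ) := fun k =>
    { toSubsemiring := (g k).rangeS
      algebraMap_mem' := fun r => ⟨seqHom φ k.zero_le r, Ring.DirectLimit.of_f _ _⟩ }
  have (k : ℕ) : Module.FaithfullyFlat (G 0) (S k) := by
    have : algebraMap (G 0) (S k) = (g k).rangeSRestrict.comp (seqHom φ k.zero_le) :=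
      RingHom.ext fun r => Subtype.ext (Ring.DirectLimit.of_f _ _).symm
    rw [← RingHom.faithfullyFlat_algebraMap_iff, this]
    refine RingHom.FaithfullyFlat.stableUnderComposition _ _ (seqHom_faithfullyFlat hφ _)
      (.of_bijective ⟨fun x y h => of_injective hφ k (congrArg Subtype.val h),
        (g k).rangeSRestrict_surjective⟩)
  have hmono : Monotone S := fun i j h _ ⟨x, hx⟩ =>
    ⟨seqHom φ h x, (Ring.DirectLimit.of_f _ _).trans hx⟩
  have htop : ⨆ k, S k = ⊤ := by
    refine eq_top_iff.mpr fun z _ => ?_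
    obtain ⟨k, x, rfl⟩ := Ring.DirectLimit.exists_of z
    exact Algebra.mem_iSup_of_mem k ⟨x, rfl⟩
  exact Module.FaithfullyFlat.of_directed_iSup_eq_top hmono.directed_le htop

theorem SeqLimit.exists_pow_eq
    (hroot : ∀ k (x : G k), ∃ y : G (k + 1), y ^ (k + 1).factorial = φ k x)
    (z : SeqLimit φ) {n : ℕ} (hn : n ≠ 0) : ∃ w, w ^ n = z := by
  obtain ⟨k, x, rfl⟩ := Ring.DirectLimit.exists_of z
  obtain ⟨y, hy⟩ := hroot (max k n) (seqHom φ (le_max_left k n) x)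
  obtain ⟨c, hc⟩ : n ∣ (max k n + 1).factorial :=
    Nat.dvd_factorial (Nat.pos_of_ne_zero hn) ((le_max_right k n).trans (max k n).le_succ)
  refine ⟨Ring.DirectLimit.of G _ (max k n + 1) y ^ c, ?_⟩
  rw [← pow_mul, mul_comm, ← hc, ← map_pow, hy, ← seqHom_le_succ φ (max k n),
    Ring.DirectLimit.of_f, Ring.DirectLimit.of_f]

end

noncomputable section

def towerAux (Λ : Type) [CommRing Λ] : ℕ → Σ R : Type, CommRing R
  | 0 => ⟨Λ, inferInstance⟩
  | k + 1 =>
    letI := (towerAux Λ k).2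
    ⟨AdjoinRoots (id : (towerAux Λ k).1 → _) (k + 1).factorial, inferInstance⟩

variable (Λ : Type) [CommRing Λ]

abbrev Tower (k : ℕ) : Type := (towerAux Λ k).1

instance (k : ℕ) : CommRing (Tower Λ k) := (towerAux Λ k).2

instance (k : ℕ) : Algebra (Tower Λ k) (Tower Λ (k + 1)) :=
  inferInstanceAs
    (Algebra (Tower Λ k) (AdjoinRoots (id : Tower Λ k → Tower Λ k) (k + 1).factorial))

def towerStep (k : ℕ) : Tower Λ k →+* Tower Λ (k + 1) :=
  algebraMap (Tower Λ k) (Tower Λ (k + 1))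

theorem towerStep_faithfullyFlat (k : ℕ) : (towerStep Λ k).FaithfullyFlat :=
  RingHom.faithfullyFlat_algebraMap_iff.mpr
    (AdjoinRoots.faithfullyFlat (id : Tower Λ k → Tower Λ k) (Nat.factorial_pos _))

theorem towerStep_exists_pow_eq (k : ℕ) (x : Tower Λ k) :
    ∃ y : Tower Λ (k + 1), y ^ (k + 1).factorial = towerStep Λ k x :=
  ⟨AdjoinRoots.root id x, AdjoinRoots.root_pow id x⟩

end

/-- For any commutative ring `Λ` there exists a commutative ring `Λ'` together
with a faithfully flat ring homomorphism `Λ → Λ'` such that the group of units of `Λ'` is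
divisible. -/
theorem stmt_0 (Λ : Type) [CommRing Λ] :
    ∃ (Λ' : Type) (_ : CommRing Λ') (f : Λ →+* Λ'),
      (letI : Module Λ Λ' := f.toModule
       Module.FaithfullyFlat Λ Λ') ∧
      ∀ (u : Λ'ˣ) (n : ℕ), 0 < n → ∃ v : Λ'ˣ, v ^ n = u := by
  refine ⟨SeqLimit (towerStep Λ), inferInstance,
    Ring.DirectLimit.of (Tower Λ) (fun _ _ h => seqHom (towerStep Λ) h) 0,
    SeqLimit.of_zero_faithfullyFlat (towerStep_faithfullyFlat Λ), fun u n hn => ?_⟩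
  obtain ⟨x, hx⟩ := SeqLimit.exists_pow_eq (towerStep_exists_pow_eq Λ) (u : SeqLimit _) hn.ne'
  exact ⟨((isUnit_pow_iff hn.ne').mp (hx ▸ u.isUnit)).unit, Units.ext hx⟩
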